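/- For every r ≥ 0 and every σ ∈ S_n, if the coefficient of σ in h_r(J_1,…,J_n) is nonzero, then n − cycles(σ) ≤ r and r − (n − cycles(σ)) is even; that is, cycles(σ) = n − r + 2g for some integer g ≥ 0. -/

import Mathlib

/-- The Jucys–Murphy element `J_{i+1}` (1-based: `J_1 = 0`,
`J_i = (1,i) + ⋯ + (i-1,i)`) in the complex group algebra of `S_n`. -/
noncomputable def jm (n : ℕ) (i : Fin n) : MonoidAlgebra ℂ (Equiv.Perm (Fin n)) :=
  ∑ k ∈ Finset.univ.filter (fun k => k < i),
    MonoidAlgebra.of ℂ (Equiv.Perm (Fin n)) (Equiv.swap k i)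

/-- The number of orbits of a permutation (cycles, counting fixed points). -/
def cycles {n : ℕ} (σ : Equiv.Perm (Fin n)) : ℕ :=
  σ.cycleType.card + (Finset.univ.filter fun x => σ x = x).card

/-- The `r`-th complete homogeneous symmetric polynomial evaluated at the Jucys–Murphy
elements: `h_r(J_1,…,J_n) = Σ_{i_1 ≤ ⋯ ≤ i_r} J_{i_1} ⋯ J_{i_r}`, the sum running over
all multisets of size `r` (the JM elements commute, so the order of the factors is
immaterial; we multiply them in increasing order). -/
noncomputable def hJM (n r : ℕ) : MonoidAlgebra ℂ (Equiv.Perm (Fin n)) :=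
  ∑ m : Sym (Fin n) r, ((Multiset.sort (m : Multiset (Fin n)) (· ≤ ·)).map (jm n)).prod

/-!
Every `J_i` is a sum of transpositions, so `h_r(J_1,…,J_n)` is supported on products of `r`
transpositions. Left multiplication by a transposition `(a b)` flips the sign and lowers the
number of orbits by at most one: every orbit of `(a b) σ` lies in a class of the partition into
`σ`-orbits with the orbits of `a` and `b` merged. Since `sign σ = (-1) ^ (n + cycles σ)`, a product
of `r` transpositions has `n - cycles σ ≤ r` and `r + n + cycles σ` even.
-/

open scoped Pointwise

namespace Setoid

variable {α : Type*}

def glue (s : Setoid α) (a b : α) : Setoid α where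
  r x y := s x y ∨ (s x a ∧ s b y) ∨ (s x b ∧ s a y)
  iseqv := by
    refine ⟨fun x => Or.inl (s.refl x), ?_, ?_⟩
    · rintro x y (h | ⟨h₁, h₂⟩ | ⟨h₁, h₂⟩)
      exacts [Or.inl (s.symm h), Or.inr (Or.inr ⟨s.symm h₂, s.symm h₁⟩),
        Or.inr (Or.inl ⟨s.symm h₂, s.symm h₁⟩)]
    · rintro x y z (h | ⟨h₁, h₂⟩ | ⟨h₁, h₂⟩) (h' | ⟨h₁', h₂'⟩ | ⟨h₁', h₂'⟩)
      exacts [Or.inl (s.trans h h'), Or.inr (Or.inl ⟨s.trans h h₁', h₂'⟩),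
        Or.inr (Or.inr ⟨s.trans h h₁', h₂'⟩), Or.inr (Or.inl ⟨h₁, s.trans h₂ h'⟩),
        Or.inr (Or.inl ⟨h₁, h₂'⟩), Or.inl (s.trans h₁ h₂'), Or.inr (Or.inr ⟨h₁, s.trans h₂ h'⟩),
        Or.inl (s.trans h₁ h₂'), Or.inr (Or.inr ⟨h₁, h₂'⟩)]

theorem le_glue (s : Setoid α) (a b : α) : s ≤ s.glue a b := fun _ _ => Or.inl

theorem card_quotient_le_of_le [Finite α] {s t : Setoid α} (h : s ≤ t) :
    Nat.card (Quotient t) ≤ Nat.card (Quotient s) :=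
  Nat.card_le_card_of_surjective (map_of_le h) (Quotient.ind fun x => ⟨Quotient.mk s x, rfl⟩)

theorem card_quotient_le_card_quotient_glue_add_one [Finite α] (s : Setoid α) (a b : α) :
    Nat.card (Quotient s) ≤ Nat.card (Quotient (s.glue a b)) + 1 := by
  classical
  -- the class of `b` is the only one that gets merged into another
  let f (q : Quotient s) : Option (Quotient (s.glue a b)) :=
    if q = Quotient.mk s b then none else some (map_of_le (s.le_glue a b) q)
  have hf : f.Injective := by
    refine Quotient.ind fun x => Quotient.ind fun y hxy => ?_
    by_cases hx : Quotient.mk s x = Quotient.mk s b <;>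
      by_cases hy : Quotient.mk s y = Quotient.mk s b <;>
      simp only [f, hx, hy, if_true, if_false, reduceCtorEq, Option.some.injEq] at hxy
    · rw [hx, hy]
    · rcases Quotient.exact (s := s.glue a b) hxy with h | ⟨-, h⟩ | ⟨h, -⟩
      · exact Quotient.sound h
      · exact absurd (Quotient.sound (s.symm h)) hy
      · exact absurd (Quotient.sound h) hx
  simpa using Nat.card_le_card_of_injective f hf

end Setoid

open Finset

namespace Equiv.Perm

section Orbits

variable {α : Type*}

noncomputable def numOrbits (σ : Perm α) : ℕ :=
  Nat.card (Quotient (SameCycle.setoid σ))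

theorem sameCycle_setoid_le_of_forall_rel_apply {σ : Perm α} {s : Setoid α}
    (h : ∀ x, s x (σ x)) :
    SameCycle.setoid σ ≤ s := by
  let H : Subgroup (Perm α) :=
    { carrier := {g | ∀ x, s x (g x)}
      mul_mem' := fun hg hh x => s.trans (hh x) (hg _)
      one_mem' := fun x => s.refl x
      inv_mem' := fun {g} hg x => s.symm (by simpa using hg (g⁻¹ x)) }
  rintro x _ ⟨i, rfl⟩
  exact H.zpow_mem (show σ ∈ H from h) i x

theorem sameCycle_setoid_swap_mul_le_glue [DecidableEq α] (σ : Perm α) (a b : α) :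
    SameCycle.setoid (swap a b * σ) ≤ (SameCycle.setoid σ).glue a b := by
  refine sameCycle_setoid_le_of_forall_rel_apply fun x => ?_
  have hx : σ.SameCycle x (σ x) := sameCycle_apply_right.2 (SameCycle.refl σ x)
  rw [mul_apply, swap_apply_def]
  split_ifs with ha hb
  · exact Or.inr (Or.inl ⟨ha ▸ hx, SameCycle.refl σ b⟩)
  · exact Or.inr (Or.inr ⟨hb ▸ hx, SameCycle.refl σ a⟩)
  · exact Or.inl hx

theorem numOrbits_le_numOrbits_swap_mul_add_one [Finite α] [DecidableEq α] (σ : Perm α)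
    (a b : α) : σ.numOrbits ≤ (swap a b * σ).numOrbits + 1 :=
  ((SameCycle.setoid σ).card_quotient_le_card_quotient_glue_add_one a b).trans
    (Nat.add_le_add_right
      (Setoid.card_quotient_le_of_le (sameCycle_setoid_swap_mul_le_glue σ a b)) 1)

end Orbits

variable {α : Type*} [Fintype α] [DecidableEq α]

def cycleFactorOrFixedPoint (σ : Perm α) (x : α) : σ.cycleFactorsFinset ⊕ {x // σ x = x} :=
  if h : σ x = x then .inr ⟨x, h⟩
  else .inl ⟨σ.cycleOf x, cycleOf_mem_cycleFactorsFinset_iff.2 (mem_support.2 h)⟩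

theorem cycleFactorOrFixedPoint_eq_iff {σ : Perm α} {x y : α} :
    σ.cycleFactorOrFixedPoint x = σ.cycleFactorOrFixedPoint y ↔ σ.SameCycle x y := by
  unfold cycleFactorOrFixedPoint
  by_cases hx : σ x = x <;> by_cases hy : σ y = y <;>
    simp only [hx, hy, dite_true, dite_false, reduceCtorEq, Sum.inr.injEq, Sum.inl.injEq,
      Subtype.mk.injEq, false_iff]
  · exact ⟨fun h => h ▸ SameCycle.refl σ x, fun h => h.eq_of_left hx⟩
  · exact fun h => hy (h.eq_of_left hx ▸ hx)
  · exact fun h => hx (h.eq_of_right hy ▸ hy)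
  · exact (sameCycle_iff_cycleOf_eq_of_mem_support (mem_support.2 hx) (mem_support.2 hy)).symm

theorem cycleFactorOrFixedPoint_surjective (σ : Perm α) :
    Function.Surjective σ.cycleFactorOrFixedPoint := by
  rintro (⟨c, hc⟩ | ⟨x, hx⟩)
  · obtain ⟨x, hx⟩ := (mem_cycleFactorsFinset_iff.1 hc).1.nonempty_support
    have hσx : σ x ≠ x := by
      rwa [← (mem_cycleFactorsFinset_iff.1 hc).2 x hx, ← mem_support]
    refine ⟨x, ?_⟩
    rw [cycleFactorOrFixedPoint, dif_neg hσx]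
    exact congrArg Sum.inl (Subtype.ext (cycle_is_cycleOf hx hc).symm)
  · exact ⟨x, by rw [cycleFactorOrFixedPoint, dif_pos hx]⟩

theorem numOrbits_eq_card_cycleType_add_card_fixed (σ : Perm α) :
    σ.numOrbits = Multiset.card σ.cycleType + #{x | σ x = x} := by
  have hker : SameCycle.setoid σ = Setoid.ker σ.cycleFactorOrFixedPoint :=
    Setoid.ext fun _ _ => cycleFactorOrFixedPoint_eq_iff.symm
  rw [numOrbits, hker, Nat.card_congr (Setoid.quotientKerEquivOfSurjective _
    σ.cycleFactorOrFixedPoint_surjective), Nat.card_sum, Nat.card_eq_fintype_card,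
    Nat.card_eq_fintype_card, Fintype.card_coe, Fintype.card_subtype, cycleType_def,
    Multiset.card_map]
  rfl

theorem sign_eq_neg_one_pow_card_add_numOrbits (σ : Perm α) :
    sign σ = (-1) ^ (Fintype.card α + σ.numOrbits) := by
  have hcard : #σ.support + #{x | σ x = x} = Fintype.card α := by
    rw [add_comm, support, card_filter_add_card_filter_not, card_univ]
  rw [sign_of_cycleType, numOrbits_eq_card_cycleType_add_card_fixed, ← hcard,
    ← sum_cycleType]
  rw [show σ.cycleType.sum + #{x | σ x = x} + (Multiset.card σ.cycleType + #{x | σ x = x}) =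
      σ.cycleType.sum + Multiset.card σ.cycleType + 2 * #{x | σ x = x} by ring,
    pow_add _ _ (2 * _), pow_mul, Int.units_sq, one_pow, mul_one]

theorem sign_of_mem_isSwap_pow {σ : Perm α} {r : ℕ} (hσ : σ ∈ {g : Perm α | g.IsSwap} ^ r) :
    sign σ = (-1) ^ r := by
  induction r generalizing σ with
  | zero => rw [pow_zero, Set.mem_one] at hσ; rw [hσ, sign_one, pow_zero]
  | succ r ih =>
    rw [pow_succ', Set.mem_mul] at hσ
    obtain ⟨τ, hτ, ρ, hρ, rfl⟩ := hσ
    rw [sign_mul, IsSwap.sign_eq hτ, ih hρ, pow_succ']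

theorem card_sub_numOrbits_le_of_mem_isSwap_pow {σ : Perm α} {r : ℕ}
    (hσ : σ ∈ {g : Perm α | g.IsSwap} ^ r) : Fintype.card α - σ.numOrbits ≤ r := by
  induction r generalizing σ with
  | zero =>
    rw [pow_zero, Set.mem_one] at hσ
    simp [hσ, numOrbits_eq_card_cycleType_add_card_fixed]
  | succ r ih =>
    rw [pow_succ', Set.mem_mul] at hσ
    obtain ⟨_, ⟨a, b, -, rfl⟩, ρ, hρ, rfl⟩ := hσ
    have := numOrbits_le_numOrbits_swap_mul_add_one ρ a b
    have := ih hρ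
    omega

theorem even_add_card_add_numOrbits_of_mem_isSwap_pow {σ : Perm α} {r : ℕ}
    (hσ : σ ∈ {g : Perm α | g.IsSwap} ^ r) : Even (r + (Fintype.card α + σ.numOrbits)) := by
  refine (neg_one_pow_eq_one_iff_even (R := ℤˣ) (by decide)).1 ?_
  rw [pow_add, ← sign_of_mem_isSwap_pow hσ, ← sign_eq_neg_one_pow_card_add_numOrbits,
    Int.units_mul_self]

end Equiv.Perm

namespace MonoidAlgebra

variable {k G : Type*} [Semiring k] [Monoid G]

theorem support_coeff_list_prod_subset_pow (S : Set G) (l : List (MonoidAlgebra k G))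
    (hl : ∀ x ∈ l, ↑x.coeff.support ⊆ S) : ↑l.prod.coeff.support ⊆ S ^ l.length := by
  classical
  induction l with
  | nil =>
    rw [List.prod_nil, List.length_nil, pow_zero, ← Finset.coe_one, Finset.coe_subset]
    exact support_coeff_one_subset
  | cons x l ih =>
    rw [List.prod_cons, List.length_cons, pow_succ']
    grw [support_coeff_mul_subset, Finset.coe_mul]
    exact Set.mul_subset_mul (hl x List.mem_cons_self)
      (ih fun y hy => hl y (List.mem_cons_of_mem x hy))

end MonoidAlgebra

open Equiv MonoidAlgebra

theorem support_coeff_jm_subset (n : ℕ) (i : Fin n) :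
    ↑(jm n i).coeff.support ⊆ {g : Perm (Fin n) | g.IsSwap} := by
  classical
  intro g hg
  rw [jm, coeff_sum] at hg
  obtain ⟨k, hk, hg⟩ := Finset.mem_biUnion.1 (Finsupp.support_finsetSum hg)
  rw [of_apply, coeff_single, Finsupp.mem_support_single] at hg
  exact ⟨k, i, (Finset.mem_filter.1 hk).2.ne, hg.1⟩

theorem support_coeff_hJM_subset (n r : ℕ) :
    ↑(hJM n r).coeff.support ⊆ {g : Perm (Fin n) | g.IsSwap} ^ r := by
  classical
  intro g hg
  rw [hJM, coeff_sum] at hg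
  obtain ⟨m, -, hg⟩ := Finset.mem_biUnion.1 (Finsupp.support_finsetSum hg)
  have hjm : ∀ x ∈ (m.1.sort (· ≤ ·)).map (jm n),
      ↑x.coeff.support ⊆ {g : Perm (Fin n) | g.IsSwap} := by
    simp only [List.mem_map]
    rintro _ ⟨i, -, rfl⟩
    exact support_coeff_jm_subset n i
  simpa [m.2] using support_coeff_list_prod_subset_pow _ _ hjm hg

theorem hJM_coeff_ne_zero_imp_general (n : ℕ) (r : ℕ) (σ : Equiv.Perm (Fin n))
    (h : (hJM n r).coeff σ ≠ 0) :
    n - cycles σ ≤ r ∧ ∃ g : ℕ, (cycles σ : ℤ) = (n : ℤ) - (r : ℤ) + 2 * (g : ℤ) := by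
  have hσ : σ ∈ {g : Perm (Fin n) | g.IsSwap} ^ r :=
    support_coeff_hJM_subset n r (Finsupp.mem_support_iff.2 h)
  have hcycles : cycles σ = σ.numOrbits :=
    (Perm.numOrbits_eq_card_cycleType_add_card_fixed σ).symm
  have hle := Perm.card_sub_numOrbits_le_of_mem_isSwap_pow hσ
  obtain ⟨g, hg⟩ := Perm.even_add_card_add_numOrbits_of_mem_isSwap_pow hσ
  rw [Fintype.card_fin, ← hcycles] at hle hg
  exact ⟨hle, (r + cycles σ - n) / 2, by omega⟩

/-- If the coefficient of `σ` in `h_r(J_1,…,J_n)` is nonzero then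
`n − cycles(σ) ≤ r` and `r − (n − cycles(σ))` is even; equivalently,
`cycles(σ) = n − r + 2g` for some integer `g ≥ 0`. -/
theorem hJM_coeff_ne_zero_imp (n : ℕ) (hn : 1 ≤ n) (r : ℕ) (σ : Equiv.Perm (Fin n))
    (h : (hJM n r).coeff σ ≠ 0) :
    n - cycles σ ≤ r ∧ ∃ g : ℕ, (cycles σ : ℤ) = (n : ℤ) - (r : ℤ) + 2 * (g : ℤ) :=
  hJM_coeff_ne_zero_imp_general n r σ h
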